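/- arXiv:2104.06733 — 2 statements merged into one kernel-verified Lean document; each statement's English description precedes it below -/
import Mathlib

section
/- Let A : [0, R] → ℝ be smooth with A(0) = −1, A(R) = 1, A'(0) = 0, A'(R) = 0, and let c₁ ∈ ℝ satisfy 2 A''(r) + c₁ A(r)² + 2 A(r) − c₁ = 0 for all r ∈ [0, R]. Then c₁ = 0. -/
/-- if a smooth `A : [0,R] → ℝ` satisfies `A(0) = −1`, `A(R) = 1`,
`A'(0) = A'(R) = 0` and the ODE `2A'' + c₁A² + 2A − c₁ = 0` on `[0,R]`,
then `c₁ = 0`. -/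
theorem stmt6 (R : ℝ) (hR : 0 < R) (A : ℝ → ℝ) (hsm : ContDiff ℝ (⊤ : ℕ∞) A)
    (hA0 : A 0 = -1) (hAR : A R = 1)
    (hA'0 : deriv A 0 = 0) (hA'R : deriv A R = 0)
    (c₁ : ℝ)
    (hODE : ∀ r ∈ Set.Icc 0 R,
      2 * deriv (deriv A) r + c₁ * A r ^ 2 + 2 * A r - c₁ = 0) :
    c₁ = 0 := by
  set E : ℝ → ℝ := fun r => (deriv A r) ^ 2 + (c₁ / 3) * (A r) ^ 3 + (A r) ^ 2 - c₁ * A r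
    with hE
  have hA' : ContDiff ℝ ((⊤ : ℕ∞) : WithTop ℕ∞) (deriv A) := (contDiff_infty_iff_deriv.mp (hsm.of_le (by simp))).2
  have hdA : Differentiable ℝ A := hsm.differentiable (by simp)
  have hdA' : Differentiable ℝ (deriv A) := hA'.differentiable (by simp)
  have hEderiv : ∀ r ∈ Set.Icc (0:ℝ) R, HasDerivAt E 0 r := by
    intro r hr
    have h1 : HasDerivAt (deriv A) (deriv (deriv A) r) r := (hdA' r).hasDerivAt
    have h2 : HasDerivAt A (deriv A r) r := (hdA r).hasDerivAt
    have hD : HasDerivAt E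
        (2 * deriv A r * deriv (deriv A) r
          + (c₁ / 3) * (3 * (A r) ^ 2 * deriv A r)
          + 2 * A r * deriv A r - c₁ * deriv A r) r := by
      have e1 := (h1.pow 2)
      have e2 := ((h2.pow 3).const_mul (c₁ / 3))
      have e3 := (h2.pow 2)
      have e4 := (h2.const_mul c₁)
      have h5 := ((e1.add e2).add e3).sub e4
      convert h5 using 1
      · rfl
      · rfl
      · rfl
      push_cast
      ring
    have key := hODE r hr
    have hz : (2 * deriv A r * deriv (deriv A) r
          + (c₁ / 3) * (3 * (A r) ^ 2 * deriv A r)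
          + 2 * A r * deriv A r - c₁ * deriv A r) = 0 := by
      have : deriv A r * (2 * deriv (deriv A) r + c₁ * A r ^ 2 + 2 * A r - c₁) = 0 := by
        rw [key]; ring
      nlinarith [this]
    rwa [hz] at hD
  have hconst : E R = E 0 := by
    have := constant_of_has_deriv_right_zero
      (f := E) (a := 0) (b := R)
      (fun x hx => ((hEderiv x hx).continuousAt.continuousWithinAt))
      (fun x hx => ((hEderiv x (Set.Ico_subset_Icc_self hx)).hasDerivWithinAt))
    exact this R (Set.right_mem_Icc.mpr hR.le)
  simp only [hE, hA0, hAR, hA'0, hA'R] at hconst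
  nlinarith [hconst]
end

section
/- There is no smooth function A : [0, R] → ℝ satisfying the boundary conditions A(0) = −1, A(R) = 1, A'(0) = A'(R) = 0, A''(0) = 1, A''(R) = −1, and A'(r) > 0 for r ∈ (0, R), such that −A'''(r) = (c₁ A(r) + c₂) A'(r) on [0, R] for some constants c₁ ≠ 0 and c₂. -/
open scoped ContDiff
lemma myConstAux (F : ℝ → ℝ) (a b : ℝ)
    (hF : ∀ x ∈ Set.uIcc a b, HasDerivAt F 0 x) : F b = F a := by
  have h := intervalIntegral.integral_eq_sub_of_hasDerivAt hF
    (intervalIntegrable_const (c := (0:ℝ)))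
  simp at h
  linarith

/-- there is no smooth `A : [0,R] → ℝ` with `A(0) = −1`, `A(R) = 1`,
`A'(0) = A'(R) = 0`, `A''(0) = 1`, `A''(R) = −1`, `A' > 0` on `(0,R)`, satisfying
`−A''' = (c₁A + c₂)·A'` on `[0,R]` for some constants `c₁ ≠ 0`, `c₂`.
(Equivalently: the Gaussian curvature `K = −A'''/A'` of a metric of revolution
cannot be a non-constant affine function `c₁A + c₂` of the normalized primitive `A`.) -/
theorem stmt7 (R : ℝ) (hR : 0 < R) :
    ¬ ∃ (A : ℝ → ℝ) (c₁ c₂ : ℝ), ContDiff ℝ (⊤ : ℕ∞) A ∧ c₁ ≠ 0 ∧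
      A 0 = -1 ∧ A R = 1 ∧ deriv A 0 = 0 ∧ deriv A R = 0 ∧
      deriv (deriv A) 0 = 1 ∧ deriv (deriv A) R = -1 ∧
      (∀ r ∈ Set.Ioo 0 R, 0 < deriv A r) ∧
      (∀ r ∈ Set.Icc 0 R,
        - deriv (deriv (deriv A)) r = (c₁ * A r + c₂) * deriv A r) := by
  rintro ⟨A, c₁, c₂, hA, hc₁, hA0, hAR, hA'0, hA'R, hA''0, hA''R, -, hODE⟩
  have hAinf : ContDiff ℝ ∞ A := hA.of_le (by simp)
  have hA1 : ContDiff ℝ ∞ (deriv A) := (contDiff_infty_iff_deriv.mp hAinf).2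
  have hA2 : ContDiff ℝ ∞ (deriv (deriv A)) := (contDiff_infty_iff_deriv.mp hA1).2
  have dA : ∀ x, HasDerivAt A (deriv A x) x :=
    fun x => (hAinf.differentiable (by simp : (∞ : WithTop ℕ∞) ≠ 0) x).hasDerivAt
  have dA1 : ∀ x, HasDerivAt (deriv A) (deriv (deriv A) x) x :=
    fun x => (hA1.differentiable (by simp : (∞ : WithTop ℕ∞) ≠ 0) x).hasDerivAt
  have dA2 : ∀ x, HasDerivAt (deriv (deriv A)) (deriv (deriv (deriv A)) x) x :=
    fun x => (hA2.differentiable (by simp : (∞ : WithTop ℕ∞) ≠ 0) x).hasDerivAt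
  set g₁ : ℝ → ℝ := fun x => deriv (deriv A) x + c₁ * (A x)^2 / 2 + c₂ * A x with hg₁def
  set K : ℝ := g₁ 0 with hKdef
  -- g₁ is constant on [0, R]
  have hg₁ : ∀ x ∈ Set.Icc (0:ℝ) R, g₁ x = K := by
    intro x hx
    apply myConstAux g₁ 0 x
    intro y hy
    have hy' : y ∈ Set.Icc (0:ℝ) R := by
      rw [Set.uIcc_of_le hx.1] at hy
      exact ⟨hy.1, hy.2.trans hx.2⟩
    have H : HasDerivAt g₁
        (deriv (deriv (deriv A)) y + c₁ * (2 * A y ^ 1 * deriv A y) / 2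
          + c₂ * deriv A y) y := by
      exact (((dA2 y).add (((dA y).pow 2).const_mul c₁ |>.div_const 2)).add
        ((dA y).const_mul c₂))
    convert H using 1
    have := hODE y hy'
    ring_nf
    nlinarith [this]
  have hg₁R : g₁ R = K := hg₁ R ⟨le_of_lt hR, le_refl R⟩
  set g₂ : ℝ → ℝ := fun x => (deriv A x)^2 / 2 + c₁ * (A x)^3 / 6
      + c₂ * (A x)^2 / 2 - K * A x with hg₂def
  have hg₂ : g₂ R = g₂ 0 := by
    apply myConstAux g₂ 0 R
    intro y hy
    have hy' : y ∈ Set.Icc (0:ℝ) R := by rwa [Set.uIcc_of_le (le_of_lt hR)] at hy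
    have H : HasDerivAt g₂
        ((2 * deriv A y ^ 1 * deriv (deriv A) y) / 2
          + c₁ * (3 * A y ^ 2 * deriv A y) / 6
          + c₂ * (2 * A y ^ 1 * deriv A y) / 2 - K * deriv A y) y := by
      exact ((((((dA1 y).pow 2).div_const 2).add
        ((((dA y).pow 3).const_mul c₁).div_const 6)).add
        ((((dA y).pow 2).const_mul c₂).div_const 2)).sub ((dA y).const_mul K))
    convert H using 1
    have h1 := hg₁ y hy'
    simp only [hg₁def] at h1
    linear_combination (-(deriv A y)) * h1
  -- Now extract the numeric contradiction
  have e0 : K = 1 + c₁ / 2 - c₂ := by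
    simp only [hKdef, hg₁def, hA0, hA''0]; ring
  have e1 : g₁ R = -1 + c₁ / 2 + c₂ := by
    simp only [hg₁def, hAR, hA''R]; ring
  have e2 : g₂ R = c₁ / 6 + c₂ / 2 - K := by
    simp only [hg₂def, hAR, hA'R]; ring
  have e3 : g₂ 0 = -c₁ / 6 + c₂ / 2 + K := by
    simp only [hg₂def, hA0, hA'0]; ring
  rw [e1, e0] at hg₁R
  rw [e2, e3] at hg₂
  apply hc₁
  linarith
end
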